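/- arXiv:1405.3436 — 2 statements merged into one kernel-verified Lean document; each statement's English description precedes it below -/
import Mathlib

section
/- Let D be a Steiner design (a (v,k,1)-design). Then γ(D) ≥ ⌈2v/k⌉ - 1. -/
/-!
Take a minimum dominating set, with `p` points `P` and `b` blocks `Bl`, so `γ = p + b`. The blocks
of `Bl` cover every point outside `P`, so `v ≤ p + b k`. A point `x ∉ P` lies on
`r = (v - 1)/(k - 1)` blocks, and each of them outside `Bl` meets `P`; as two points share at most
one block, at most `p` blocks through `x` lie outside `Bl`. If `v ≤ p k + k - p` we add this to
`v ≤ p + b k`. Otherwise `r > p + 1`, so every point outside `P` lies on two blocks of `Bl`, and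
double counting gives `2 (v - p) ≤ b k`. Either way `2 v ≤ k (γ + 1)`.
-/

open Finset

variable {α ι : Type*}

/-- The incidence (Levi) graph of the block family `B` indexed by `ι` over point set `α`:
a bipartite graph where point `p` is adjacent to block `i` iff `p ∈ B i`. -/
def incGraph (B : ι → Finset α) : SimpleGraph (α ⊕ ι) where
  Adj x y :=
    (∃ p i, x = Sum.inl p ∧ y = Sum.inr i ∧ p ∈ B i) ∨
    (∃ p i, x = Sum.inr i ∧ y = Sum.inl p ∧ p ∈ B i)
  symm := by
    constructor
    rintro x y (⟨p, i, rfl, rfl, h⟩ | ⟨p, i, rfl, rfl, h⟩)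
    · exact Or.inr ⟨p, i, rfl, rfl, h⟩
    · exact Or.inl ⟨p, i, rfl, rfl, h⟩
  loopless := by
    constructor
    rintro x (⟨p, i, rfl, h, -⟩ | ⟨p, i, rfl, h, -⟩) <;> simp at h

/-- A dominating set of vertices in a graph: every vertex not in `S` has a neighbour in `S`. -/
def IsDomSet {V : Type*} (G : SimpleGraph V) (S : Finset V) : Prop :=
  ∀ v ∉ S, ∃ s ∈ S, G.Adj v s

/-- The domination number of a graph: the minimum size of a dominating set. -/
noncomputable def domNum {V : Type*} (G : SimpleGraph V) : ℕ :=
  sInf {n | ∃ S : Finset V, IsDomSet G S ∧ S.card = n}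

section IncidenceGraph

variable (B : ι → Finset α)

@[simp]
lemma incGraph_adj_inl_inr {p : α} {i : ι} : (incGraph B).Adj (.inl p) (.inr i) ↔ p ∈ B i := by
  simp [incGraph]

@[simp]
lemma incGraph_adj_inr_inl {p : α} {i : ι} : (incGraph B).Adj (.inr i) (.inl p) ↔ p ∈ B i := by
  simp [incGraph]

@[simp]
lemma incGraph_not_adj_inl_inl {p q : α} : ¬(incGraph B).Adj (.inl p) (.inl q) := by
  simp [incGraph]

@[simp]
lemma incGraph_not_adj_inr_inr {i j : ι} : ¬(incGraph B).Adj (.inr i) (.inr j) := by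
  simp [incGraph]

variable {B} {S : Finset (α ⊕ ι)}

lemma IsDomSet.exists_mem_toRight_of_notMem (hS : IsDomSet (incGraph B) S) {x : α}
    (hx : x ∉ S.toLeft) : ∃ i ∈ S.toRight, x ∈ B i := by
  obtain ⟨q | i, hs, hadj⟩ := hS (.inl x) (by simpa using hx)
  · simp at hadj
  · exact ⟨i, by simpa using hs, by simpa using hadj⟩

lemma IsDomSet.exists_mem_toLeft_of_notMem (hS : IsDomSet (incGraph B) S) {i : ι}
    (hi : i ∉ S.toRight) : ∃ x ∈ S.toLeft, x ∈ B i := by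
  obtain ⟨q | j, hs, hadj⟩ := hS (.inr i) (by simpa using hi)
  · exact ⟨q, by simpa using hs, by simpa using hadj⟩
  · simp at hadj

end IncidenceGraph

lemma exists_isDomSet_card_eq_domNum {V : Type*} [Fintype V] (G : SimpleGraph V) :
    ∃ S, IsDomSet G S ∧ #S = domNum G :=
  Nat.sInf_mem (s := {n | ∃ S : Finset V, IsDomSet G S ∧ #S = n})
    ⟨_, univ, fun v hv => (hv (mem_univ v)).elim, rfl⟩

section Design

variable [DecidableEq α] {B : ι → Finset α} {k : ℕ} {P : Finset α} {Bl : Finset ι}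

lemma card_le_card_add_card_mul_of_forall_exists_mem [Fintype α] (hblock : ∀ i, #(B i) = k)
    (hcover : ∀ x ∉ P, ∃ i ∈ Bl, x ∈ B i) : Fintype.card α ≤ #P + #Bl * k := by
  have hsub : (univ : Finset α) ⊆ P ∪ Bl.biUnion B := fun x _ => by
    by_cases hx : x ∈ P
    · exact mem_union_left _ hx
    · obtain ⟨i, hi, hxi⟩ := hcover x hx
      exact mem_union_right _ (mem_biUnion.2 ⟨i, hi, hxi⟩)
  calc Fintype.card α = #(univ : Finset α) := card_univ.symm
    _ ≤ #P + #(Bl.biUnion B) := (card_le_card hsub).trans (card_union_le _ _)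
    _ ≤ #P + #Bl * k := by
      gcongr; exact card_biUnion_le_card_mul _ _ _ fun i _ => (hblock i).le

lemma card_filter_mem_mul_sub_one [Fintype ι] [Fintype α] (hblock : ∀ i, #(B i) = k)
    (hpair : ∀ x y : α, x ≠ y → #{i | x ∈ B i ∧ y ∈ B i} = 1) (x : α) :
    #{i | x ∈ B i} * (k - 1) = Fintype.card α - 1 := by
  have := card_mul_eq_card_mul (s := {i | x ∈ B i}) (t := univ.erase x) (fun i y => y ∈ B i)
    (m := k - 1) (n := 1)
    (fun i hi => by
      rw [← hblock i, ← card_erase_of_mem (mem_filter.1 hi).2]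
      congr 1; ext y; simp [bipartiteAbove, and_comm])
    (fun y hy => by
      rw [← hpair x y (mem_erase.1 hy).1.symm]
      congr 1; ext i; simp [bipartiteBelow])
  rwa [mul_one, card_erase_of_mem (mem_univ x), card_univ] at this

lemma card_filter_mem_le_card_filter_add_card [Fintype ι]
    (hpair : ∀ x y : α, x ≠ y → #{i | x ∈ B i ∧ y ∈ B i} ≤ 1)
    (hmeet : ∀ i ∉ Bl, ∃ q ∈ P, q ∈ B i) {x : α} (hx : x ∉ P) :
    #{i | x ∈ B i} ≤ #{i ∈ Bl | x ∈ B i} + #P := by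
  classical
  have hsub : ({i | x ∈ B i} : Finset ι) ⊆
      {i ∈ Bl | x ∈ B i} ∪ P.biUnion fun q => {i | x ∈ B i ∧ q ∈ B i} := fun i hi => by
    have hxi := (mem_filter.1 hi).2
    by_cases hiBl : i ∈ Bl
    · exact mem_union_left _ (mem_filter.2 ⟨hiBl, hxi⟩)
    · obtain ⟨q, hq, hqi⟩ := hmeet i hiBl
      exact mem_union_right _ (mem_biUnion.2 ⟨q, hq, by simp [hxi, hqi]⟩)
  calc #{i | x ∈ B i} ≤ #{i ∈ Bl | x ∈ B i} + #(P.biUnion fun q => {i | x ∈ B i ∧ q ∈ B i}) :=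
        (card_le_card hsub).trans (card_union_le _ _)
    _ ≤ #{i ∈ Bl | x ∈ B i} + #P * 1 := by
      gcongr
      exact card_biUnion_le_card_mul _ _ _ fun q hq => hpair x q fun h => hx (h ▸ hq)
    _ = #{i ∈ Bl | x ∈ B i} + #P := by rw [mul_one]

lemma two_mul_card_compl_le [Fintype α] (hblock : ∀ i, #(B i) = k)
    (htwice : ∀ x ∉ P, 2 ≤ #{i ∈ Bl | x ∈ B i}) : 2 * #Pᶜ ≤ #Bl * k := by
  rw [mul_comm]
  exact card_mul_le_card_mul (fun x i => x ∈ B i)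
    (fun x hx => by simpa [bipartiteAbove] using htwice x (mem_compl.1 hx))
    (fun i _ => (card_le_card fun y hy => (mem_filter.1 hy).2).trans (hblock i).le)

theorem two_mul_card_le_mul_card_add_card_add_one [Fintype ι] [Fintype α] (hk : 2 ≤ k)
    (hblock : ∀ i, #(B i) = k)
    (hpair : ∀ x y : α, x ≠ y → #{i | x ∈ B i ∧ y ∈ B i} = 1)
    (hcover : ∀ x ∉ P, ∃ i ∈ Bl, x ∈ B i) (hmeet : ∀ i ∉ Bl, ∃ q ∈ P, q ∈ B i) :
    2 * Fintype.card α ≤ k * (#P + #Bl + 1) := by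
  have hv := card_le_card_add_card_mul_of_forall_exists_mem hblock hcover
  have hpk : (#P + 1) * (k - 1) + #P + 1 = #P * k + k := by
    obtain ⟨j, rfl⟩ : ∃ j, k = j + 1 := ⟨k - 1, by omega⟩
    rw [Nat.add_sub_cancel]; ring
  by_cases hsmall : Fintype.card α + #P ≤ #P * k + k
  · linarith
  have htwice : ∀ x ∉ P, 2 ≤ #{i ∈ Bl | x ∈ B i} := fun x hx => by
    by_contra! hlt
    have hr : #{i | x ∈ B i} ≤ #P + 1 := by
      have := card_filter_mem_le_card_filter_add_card (fun x y h => (hpair x y h).le) hmeet hx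
      omega
    have hrep := card_filter_mem_mul_sub_one hblock hpair x
    have := Nat.mul_le_mul_right (k - 1) hr
    omega
  have hdouble := two_mul_card_compl_le hblock htwice
  rw [card_compl] at hdouble
  have hP := card_le_univ P
  have hpk' := Nat.mul_le_mul_left #P hk
  have : 2 * Fintype.card α ≤ 2 * #P + #Bl * k := by omega
  linarith

end Design

theorem stmt10_general [Fintype α] [Fintype ι] [DecidableEq α]
    (B : ι → Finset α) (v k : ℕ)
    (hv : Fintype.card α = v)
    (hk2 : 2 ≤ k)
    (hblock : ∀ i, (B i).card = k)
    (hpair : ∀ x y : α, x ≠ y →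
      (Finset.univ.filter fun i => x ∈ B i ∧ y ∈ B i).card = 1) :
    (2 * v) ⌈/⌉ k - 1 ≤ domNum (incGraph B) := by
  obtain ⟨S, hS, hcard⟩ := exists_isDomSet_card_eq_domNum (incGraph B)
  have hbound := two_mul_card_le_mul_card_add_card_add_one hk2 hblock hpair
    (fun _ => hS.exists_mem_toRight_of_notMem) (fun _ => hS.exists_mem_toLeft_of_notMem)
  rw [card_toLeft_add_card_toRight, hcard, hv] at hbound
  have : (2 * v) ⌈/⌉ k ≤ domNum (incGraph B) + 1 := (ceilDiv_le_iff_le_mul (by omega)).2 hbound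
  omega

/-- For a Steiner design (a `(v,k,1)`-design),
`γ(D) ≥ ⌈2v/k⌉ - 1`. -/
theorem stmt10 [Fintype α] [Fintype ι] [DecidableEq α]
    (B : ι → Finset α) (v k : ℕ)
    (hv : Fintype.card α = v)
    (hk2 : 2 ≤ k) (hkv : k < v)
    (hblock : ∀ i, (B i).card = k)
    (hpair : ∀ x y : α, x ≠ y →
      (Finset.univ.filter fun i => x ∈ B i ∧ y ∈ B i).card = 1) :
    (2 * v) ⌈/⌉ k - 1 ≤ domNum (incGraph B) :=
  stmt10_general B v k hv hk2 hblock hpair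
end

section
/- Let D be a symmetric (v,k,λ)-design, i.e., a (v,k,λ)-design whose number of blocks b equals v. Then γ(D) ≤ 2(k - λ + 1). -/
open Finset

variable {α ι : Type*}

/-! In a symmetric design every point lies on exactly `k` blocks, and a variance computation
for the sizes `|B ∩ B₀|` shows that two distinct blocks meet in exactly `λ` points; so the dual
is again a `(v,k,λ)`-design. A block `B₀` differs from any other block in `k - λ` points, hence
any `k - λ + 1` points of `B₀` meet every block; dually, any `k - λ + 1` blocks through a point
cover every point. Together these `2(k - λ + 1)` vertices dominate the incidence graph. -/

def blocksThrough [Fintype ι] [DecidableEq α] (B : ι → Finset α) (x : α) : Finset ι :=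
  {i | x ∈ B i}

structure IsDesign [Fintype ι] [DecidableEq α] (B : ι → Finset α) (k l : ℕ) : Prop where
  card_block : ∀ i, #(B i) = k
  card_pair : ∀ x y, x ≠ y → #{i | x ∈ B i ∧ y ∈ B i} = l

section DoubleCounting

variable [Fintype ι] [DecidableEq α] (B : ι → Finset α)

@[simp]
lemma mem_blocksThrough {x : α} {i : ι} : i ∈ blocksThrough B x ↔ x ∈ B i := by
  simp [blocksThrough]

lemma blocksThrough_blocksThrough [Fintype α] [DecidableEq ι] :
    blocksThrough (blocksThrough B) = B := by
  ext i x
  simp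

lemma sum_card_inter_eq_sum_card_blocksThrough (s : Finset α) :
    ∑ i, #(B i ∩ s) = ∑ x ∈ s, #(blocksThrough B x) := by
  convert sum_card_bipartiteAbove_eq_sum_card_bipartiteBelow (s := univ) (t := s)
    (r := fun i x => x ∈ B i) using 3 with i - x -
  · ext x
    simp [mem_bipartiteAbove, and_comm]
  · ext i
    simp [mem_bipartiteBelow]

lemma sum_card_inter_mul_card_inter (s t : Finset α) :
    ∑ i, #(B i ∩ s) * #(B i ∩ t) = ∑ x ∈ s, ∑ y ∈ t, #{i | x ∈ B i ∧ y ∈ B i} := by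
  rw [← sum_product' (f := fun x y => #{i | x ∈ B i ∧ y ∈ B i})]
  convert sum_card_bipartiteAbove_eq_sum_card_bipartiteBelow (s := univ) (t := s ×ˢ t)
    (r := fun i p => p.1 ∈ B i ∧ p.2 ∈ B i) using 2 with i -
  · rw [← card_product]
    congr 1
    ext ⟨x, y⟩
    simp only [mem_product, mem_inter, mem_bipartiteAbove]
    tauto
  · rfl

end DoubleCounting

namespace IsDesign

variable [Fintype ι] [DecidableEq α] {B : ι → Finset α} {k l : ℕ}

lemma sum_card_pair_of_mem (hD : IsDesign B k l) {x : α} {t : Finset α} (hx : x ∈ t) :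
    ∑ y ∈ t, #{i | x ∈ B i ∧ y ∈ B i} = #(blocksThrough B x) + (#t - 1) * l := by
  rw [← add_sum_erase t _ hx,
    sum_congr rfl fun y hy => hD.card_pair x y (ne_of_mem_erase hy).symm, sum_const,
    card_erase_of_mem hx, smul_eq_mul]
  simp [blocksThrough]

lemma exists_mem_of_subset_blocksThrough (hD : IsDesign B k l) {x : α} {r : ℕ}
    (hx : #(blocksThrough B x) = r) {Q : Finset ι} (hQ : Q ⊆ blocksThrough B x)
    (hQcard : #Q = r - l + 1) (y : α) : ∃ i ∈ Q, y ∈ B i := by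
  obtain rfl | hxy := eq_or_ne x y
  · obtain ⟨i, hi⟩ : Q.Nonempty := card_pos.1 (by omega)
    exact ⟨i, hi, (mem_blocksThrough B).1 (hQ hi)⟩
  · by_contra! h
    have hsub : Q ⊆ {i ∈ blocksThrough B x | y ∉ B i} := fun i hi =>
      mem_filter.2 ⟨hQ hi, h i hi⟩
    have hsplit := card_filter_add_card_filter_not (s := blocksThrough B x) (fun i => y ∈ B i)
    have hpair : #{i ∈ blocksThrough B x | y ∈ B i} = l := by
      rw [← hD.card_pair x y hxy]
      congr 1
      ext i
      simp
    have := card_le_card hsub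
    omega

variable [Fintype α]

lemma card_blocksThrough_mul (hD : IsDesign B k l) (x : α) :
    #(blocksThrough B x) * (k - 1) = (Fintype.card α - 1) * l := by
  have h := sum_card_inter_mul_card_inter B {x} univ
  simp only [inter_univ, hD.card_block, ← sum_mul, sum_card_inter_eq_sum_card_blocksThrough,
    sum_singleton, hD.sum_card_pair_of_mem (mem_univ x), card_univ] at h
  rw [Nat.mul_sub_one]
  omega

lemma sum_card_blocksThrough (hD : IsDesign B k l) :
    ∑ x, #(blocksThrough B x) = Fintype.card ι * k := by
  simp [← sum_card_inter_eq_sum_card_blocksThrough, hD.card_block]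

lemma card_blocksThrough (hD : IsDesign B k l) (hk : 2 ≤ k)
    (hsym : Fintype.card ι = Fintype.card α) (x : α) : #(blocksThrough B x) = k := by
  have hconst : ∀ y, #(blocksThrough B y) = #(blocksThrough B x) := fun y =>
    Nat.eq_of_mul_eq_mul_right (by omega)
      ((hD.card_blocksThrough_mul y).trans (hD.card_blocksThrough_mul x).symm)
  have h := hD.sum_card_blocksThrough
  rw [sum_congr rfl fun y _ => hconst y, sum_const, card_univ, smul_eq_mul, hsym] at h
  exact Nat.eq_of_mul_eq_mul_left (Fintype.card_pos_iff.2 ⟨x⟩) h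

lemma sum_card_inter_sub_sq (hD : IsDesign B k l) (hk : 2 ≤ k)
    (hsym : Fintype.card ι = Fintype.card α) (j : ι) :
    ∑ i, ((#(B i ∩ B j) : ℤ) - l) ^ 2 = ((k : ℤ) - l) ^ 2 := by
  set M : ι → ℕ := fun i => #(B i ∩ B j) with hM
  have hr := hD.card_blocksThrough hk hsym
  obtain ⟨x, -⟩ : (B j).Nonempty := card_pos.1 (by rw [hD.card_block]; omega)
  have hα : 1 ≤ Fintype.card α := Fintype.card_pos_iff.2 ⟨x⟩
  have hpairs : k * (k - 1) = (Fintype.card α - 1) * l := by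
    simpa only [hr x] using hD.card_blocksThrough_mul x
  have hsum : ∑ i, M i = k * k := by
    rw [hM, sum_card_inter_eq_sum_card_blocksThrough, sum_congr rfl fun x _ => hr x, sum_const,
      smul_eq_mul, hD.card_block]
  have hsumsq : ∑ i, M i * M i = k * (k + (k - 1) * l) := by
    rw [hM, sum_card_inter_mul_card_inter, sum_congr rfl fun x hx => hD.sum_card_pair_of_mem hx]
    simp only [hr, hD.card_block, sum_const, smul_eq_mul]
  have hexp : ∑ i, ((M i : ℤ) - l) ^ 2
      = ∑ i, (M i * M i : ℤ) - 2 * l * ∑ i, (M i : ℤ) + Fintype.card ι * l ^ 2 := by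
    rw [← sum_congr rfl fun i _ =>
      (show (M i * M i : ℤ) - 2 * l * M i + l ^ 2 = (M i - l) ^ 2 by ring)]
    simp only [sum_add_distrib, sum_sub_distrib, ← mul_sum, sum_const, card_univ, nsmul_eq_mul]
  zify [hα, (by omega : 1 ≤ k)] at hpairs hsumsq hsum
  rw [hexp, hsum, hsumsq, hsym]
  linear_combination -(l : ℤ) * hpairs

lemma card_inter (hD : IsDesign B k l) (hk : 2 ≤ k) (hsym : Fintype.card ι = Fintype.card α)
    {i j : ι} (hij : i ≠ j) : #(B i ∩ B j) = l := by
  classical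
  have hvar := hD.sum_card_inter_sub_sq hk hsym j
  rw [← add_sum_erase _ _ (mem_univ j), inter_self, hD.card_block, add_eq_left] at hvar
  have hi := (sum_eq_zero_iff_of_nonneg fun _ _ => sq_nonneg _).1 hvar i
    (mem_erase.2 ⟨hij, mem_univ i⟩)
  have : (#(B i ∩ B j) : ℤ) = l := by linarith [pow_eq_zero_iff two_ne_zero |>.1 hi]
  exact_mod_cast this

lemma dual [DecidableEq ι] (hD : IsDesign B k l) (hk : 2 ≤ k)
    (hsym : Fintype.card ι = Fintype.card α) : IsDesign (blocksThrough B) k l where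
  card_block := hD.card_blocksThrough hk hsym
  card_pair i j hij := by
    rw [← hD.card_inter hk hsym hij]
    congr 1
    ext x
    simp

lemma exists_mem_of_subset_block (hD : IsDesign B k l) (hk : 2 ≤ k)
    (hsym : Fintype.card ι = Fintype.card α) {j : ι} {P : Finset α} (hP : P ⊆ B j)
    (hPcard : #P = k - l + 1) (i : ι) : ∃ p ∈ P, p ∈ B i := by
  classical
  have hP' : P ⊆ blocksThrough (blocksThrough B) j := by rwa [blocksThrough_blocksThrough]
  simpa using (hD.dual hk hsym).exists_mem_of_subset_blocksThrough
    (by rw [blocksThrough_blocksThrough, hD.card_block]) hP' hPcard i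

end IsDesign

lemma isDomSet_incGraph_disjSum {B : ι → Finset α} {P : Finset α} {Q : Finset ι}
    (hP : ∀ i, ∃ p ∈ P, p ∈ B i) (hQ : ∀ x, ∃ i ∈ Q, x ∈ B i) :
    IsDomSet (incGraph B) (P.disjSum Q) := by
  rintro (x | i) -
  · obtain ⟨i, hi, hx⟩ := hQ x
    exact ⟨.inr i, inr_mem_disjSum.2 hi, Or.inl ⟨x, i, rfl, rfl, hx⟩⟩
  · obtain ⟨p, hp, hpi⟩ := hP i
    exact ⟨.inl p, inl_mem_disjSum.2 hp, Or.inr ⟨p, i, rfl, rfl, hpi⟩⟩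

lemma domNum_le_card {V : Type*} {G : SimpleGraph V} {S : Finset V} (hS : IsDomSet G S) :
    domNum G ≤ #S :=
  Nat.sInf_le ⟨S, hS, rfl⟩

/-- For a symmetric `(v,k,λ)`-design (one whose number of blocks equals
`v`), `γ(D) ≤ 2(k - λ + 1)`. -/
theorem stmt18 [Fintype α] [Fintype ι] [DecidableEq α]
    (B : ι → Finset α) (v k l : ℕ)
    (hv : Fintype.card α = v)
    (hk2 : 2 ≤ k) (hkv : k < v) (hl : 1 ≤ l)
    (hblock : ∀ i, (B i).card = k)
    (hpair : ∀ x y : α, x ≠ y →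
      (Finset.univ.filter fun i => x ∈ B i ∧ y ∈ B i).card = l)
    (hsym : Fintype.card ι = v) :
    domNum (incGraph B) ≤ 2 * (k - l + 1) := by
  have hD : IsDesign B k l := ⟨hblock, hpair⟩
  have hsym' : Fintype.card ι = Fintype.card α := hsym.trans hv.symm
  have hr := hD.card_blocksThrough hk2 hsym'
  obtain ⟨j⟩ : Nonempty ι := Fintype.card_pos_iff.1 (by omega)
  obtain ⟨x⟩ : Nonempty α := Fintype.card_pos_iff.1 (by omega)
  obtain ⟨P, hPB, hP⟩ := exists_subset_card_eq (show k - l + 1 ≤ #(B j) by rw [hblock]; omega)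
  obtain ⟨Q, hQB, hQ⟩ :=
    exists_subset_card_eq (show k - l + 1 ≤ #(blocksThrough B x) by rw [hr]; omega)
  have hdom : IsDomSet (incGraph B) (P.disjSum Q) := isDomSet_incGraph_disjSum
    (hD.exists_mem_of_subset_block hk2 hsym' hPB hP)
    (hD.exists_mem_of_subset_blocksThrough (hr x) hQB hQ)
  calc domNum (incGraph B) ≤ #(P.disjSum Q) := domNum_le_card hdom
    _ = 2 * (k - l + 1) := by rw [card_disjSum, hP, hQ]; ring
end
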